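/- Let G=(V,E) be a connected graph and T ⊆ V of even cardinality. Let J₁,…,J_k be spanning trees of G and λ₁,…,λ_k ≥ 0 with ∑_i λ_i = 1, and set x* = ∑_i λ_i·χ(J_i). For each i let D_i be the wrong-degree set of J_i with respect to T. Then for every T-odd set U ⊆ V, the total weight of trees whose wrong-degree set meets U in an odd number of nodes satisfies ∑_{i : |D_i ∩ U| odd} λ_i ≤ x*(δ(U)) − 1. -/

import Mathlib

open Finset
open scoped Classical

variable {V : Type*}

/-- `x(δ(U))`: the total `x`-value of the edges of `G` with exactly one endpoint in `U`. -/
noncomputable def xCut [Fintype V] [DecidableEq V] (G : SimpleGraph V)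
    (x : Sym2 V → ℝ) (U : Finset V) : ℝ :=
  ∑ u ∈ U, ∑ w ∈ Uᶜ, if G.Adj u w then x s(u, w) else 0

/-- The degree of a vertex `v` in a simple graph `J`. -/
noncomputable def treeDeg (J : SimpleGraph V) (v : V) : ℕ :=
  Nat.card {w // J.Adj v w}

/-!
Every spanning tree `J` crosses the cut `δ(U)` at least once, because `U` meets `T` and,
`T` being even and `U ∩ T` odd, also misses a vertex. Modulo 2 the number of crossing edges
is `∑_{u ∈ U} deg_J u` (edges inside `U` are counted twice), and `deg_J u` is odd exactly
when `u` lies in one of `T`, `D`; so the crossing number is `|U ∩ T| + |U ∩ D| ≡ 0` when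
`|U ∩ D|` is odd, hence at least 2. Averaging the crossing numbers with the weights `λᵢ`
gives the bound.
-/

lemma treeDeg_eq_sum_ite [Fintype V] (J : SimpleGraph V) (v : V) :
    treeDeg J v = ∑ w, if J.Adj v w then 1 else 0 := by
  rw [treeDeg, Nat.card_eq_fintype_card, Fintype.card_subtype, sum_boole, Nat.cast_id]

lemma sum_sum_adj_zmod_two_eq_zero (J : SimpleGraph V) (U : Finset V) :
    ∑ u ∈ U, ∑ w ∈ U, (if J.Adj u w then 1 else 0 : ZMod 2) = 0 := by
  rw [← sum_product']
  refine sum_involution (fun p _ => p.swap) (fun p _ => ?_) (fun p _ hp hswap => ?_)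
    (fun p hp => by simpa [and_comm] using hp) (fun p _ => p.swap_swap)
  · by_cases h : J.Adj p.1 p.2
    · simp only [Prod.fst_swap, Prod.snd_swap, h, h.symm, if_true]
      decide
    · have h' : ¬J.Adj p.2 p.1 := fun h' => h h'.symm
      simp [h, h']
  · refine hp ?_
    rw [Prod.swap_eq_iff_eq_swap, Prod.ext_iff] at hswap
    simp [hswap.1]

lemma cast_treeDeg_eq_of_wrongDegree [DecidableEq V] {J : SimpleGraph V} {T D : Finset V}
    (hD : ∀ v, v ∈ D ↔
      ((v ∈ T ∧ Even (treeDeg J v)) ∨ (v ∉ T ∧ Odd (treeDeg J v)))) (v : V) :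
    (treeDeg J v : ZMod 2) = (if v ∈ T then 1 else 0) + (if v ∈ D then 1 else 0) := by
  rcases Nat.even_or_odd (treeDeg J v) with h | h
  · rw [(ZMod.natCast_eq_zero_iff_even).2 h]
    by_cases hT : v ∈ T <;> simp [hD, hT, h, Nat.not_odd_iff_even.2 h]
    decide
  · rw [(ZMod.natCast_eq_one_iff_odd).2 h]
    by_cases hT : v ∈ T <;> simp [hD, hT, h, Nat.not_even_iff_odd.2 h]

section Cut

variable [Fintype V] [DecidableEq V]

noncomputable def cutSize (J : SimpleGraph V) (U : Finset V) : ℕ :=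
  ∑ u ∈ U, ∑ w ∈ Uᶜ, if J.Adj u w then 1 else 0

lemma xCut_eq_sum_mul_cutSize {ι : Type*} [Fintype ι] (G : SimpleGraph V)
    (J : ι → SimpleGraph V) (hJG : ∀ i, J i ≤ G) (lam : ι → ℝ) (x : Sym2 V → ℝ)
    (hx : ∀ e ∈ G.edgeSet, x e = ∑ i, lam i * (if e ∈ (J i).edgeSet then 1 else 0))
    (U : Finset V) :
    xCut G x U = ∑ i, lam i * cutSize (J i) U := by
  have hxAdj : ∀ u w, (if G.Adj u w then x s(u, w) else 0)
      = ∑ i, lam i * (if (J i).Adj u w then 1 else 0) := by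
    intro u w
    by_cases h : G.Adj u w
    · simp [h, hx s(u, w) h]
    · simp [h, fun i => mt (@hJG i u w) h]
  simp only [xCut, cutSize, hxAdj, Nat.cast_sum, Nat.cast_ite, Nat.cast_one, Nat.cast_zero,
    mul_sum]
  exact (sum_congr rfl fun u _ => sum_comm).trans sum_comm

lemma one_le_cutSize {J : SimpleGraph V} (hJ : J.Connected) {U : Finset V} {u w : V}
    (hu : u ∈ U) (hw : w ∉ U) : 1 ≤ cutSize J U := by
  obtain ⟨d, -, hd₁, hd₂⟩ :=
    (hJ.preconnected u w).some.exists_boundary_dart (U : Set V) hu hw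
  have hd : 1 ≤ ∑ w ∈ Uᶜ, if J.Adj d.fst w then 1 else 0 :=
    (if_pos d.adj).symm.trans_le <| single_le_sum
      (f := fun w => if J.Adj d.fst w then 1 else 0) (fun _ _ => Nat.zero_le _) (mem_compl.2 hd₂)
  exact hd.trans <|
    single_le_sum (f := fun u => ∑ w ∈ Uᶜ, if J.Adj u w then 1 else 0) (by simp) hd₁

lemma cast_cutSize_eq_sum_treeDeg (J : SimpleGraph V) (U : Finset V) :
    (cutSize J U : ZMod 2) = ∑ u ∈ U, (treeDeg J u : ZMod 2) := by
  have hsplit : ∀ u, (treeDeg J u : ZMod 2) = ∑ w ∈ U, (if J.Adj u w then 1 else 0 : ZMod 2)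
      + ∑ w ∈ Uᶜ, (if J.Adj u w then 1 else 0 : ZMod 2) := by
    intro u
    rw [sum_add_sum_compl, treeDeg_eq_sum_ite]
    push_cast
    rfl
  simp only [hsplit, sum_add_distrib, sum_sum_adj_zmod_two_eq_zero, zero_add, cutSize]
  push_cast
  rfl

lemma even_cutSize_of_odd_of_odd {J : SimpleGraph V} {T D U : Finset V}
    (hD : ∀ v, v ∈ D ↔
      ((v ∈ T ∧ Even (treeDeg J v)) ∨ (v ∉ T ∧ Odd (treeDeg J v))))
    (hUT : Odd (U ∩ T).card) (hUD : Odd (U ∩ D).card) : Even (cutSize J U) := by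
  rw [← ZMod.natCast_eq_zero_iff_even, cast_cutSize_eq_sum_treeDeg,
    sum_congr rfl fun v _ => cast_treeDeg_eq_of_wrongDegree hD v, sum_add_distrib,
    sum_boole, sum_boole, filter_mem_eq_inter, filter_mem_eq_inter,
    (ZMod.natCast_eq_one_iff_odd).2 hUT, (ZMod.natCast_eq_one_iff_odd).2 hUD]
  decide

end Cut

lemma sum_filter_le_sum_mul_sub_one {ι : Type*} [Fintype ι] (p : ι → Prop) [DecidablePred p]
    (lam : ι → ℝ) (c : ι → ℕ) (hlam0 : ∀ i, 0 ≤ lam i) (hlam1 : ∑ i, lam i = 1)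
    (hc1 : ∀ i, 1 ≤ c i) (hc2 : ∀ i, p i → 2 ≤ c i) :
    ∑ i ∈ univ.filter p, lam i ≤ ∑ i, lam i * c i - 1 := by
  calc ∑ i ∈ univ.filter p, lam i ≤ ∑ i ∈ univ.filter p, lam i * ((c i : ℝ) - 1) := by
        refine sum_le_sum fun i hi => ?_
        have : (2 : ℝ) ≤ c i := by exact_mod_cast hc2 i (mem_filter.1 hi).2
        nlinarith [hlam0 i]
    _ ≤ ∑ i, lam i * ((c i : ℝ) - 1) := by
        refine sum_le_sum_of_subset_of_nonneg (filter_subset _ _) fun i _ _ => ?_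
        have : (1 : ℝ) ≤ c i := by exact_mod_cast hc1 i
        nlinarith [hlam0 i]
    _ = ∑ i, lam i * c i - 1 := by
        simp only [mul_sub, mul_one, sum_sub_distrib, hlam1]

theorem stmt12_general {V : Type*} [Fintype V] [DecidableEq V]
    (G : SimpleGraph V)
    (T : Finset V) (hTeven : Even T.card)
    (k : ℕ) (J : Fin k → SimpleGraph V)
    (hJG : ∀ i, J i ≤ G) (hJtree : ∀ i, (J i).IsTree)
    (lam : Fin k → ℝ) (hlam0 : ∀ i, 0 ≤ lam i) (hlam1 : ∑ i, lam i = 1)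
    (x : Sym2 V → ℝ)
    (hx : ∀ e ∈ G.edgeSet,
      x e = ∑ i, lam i * (if e ∈ (J i).edgeSet then 1 else 0))
    (D : Fin k → Finset V)
    (hD : ∀ i v, v ∈ D i ↔
      ((v ∈ T ∧ Even (treeDeg (J i) v)) ∨ (v ∉ T ∧ Odd (treeDeg (J i) v))))
    (U : Finset V) (hU : Odd ((U ∩ T).card)) :
    ∑ i ∈ univ.filter (fun i => Odd ((U ∩ D i).card)), lam i ≤ xCut G x U - 1 := by
  obtain ⟨u, hu⟩ := card_pos.1 hU.pos
  have hTU : ¬ T ⊆ U := fun h =>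
    Nat.not_even_iff_odd.2 hU (by rwa [inter_eq_right.2 h])
  obtain ⟨w, -, hw⟩ := not_subset.1 hTU
  have hcut_pos i : 1 ≤ cutSize (J i) U :=
    one_le_cutSize (hJtree i).connected (mem_inter.1 hu).1 hw
  rw [xCut_eq_sum_mul_cutSize G J hJG lam x hx U]
  refine sum_filter_le_sum_mul_sub_one _ lam _ hlam0 hlam1 hcut_pos fun i hi => ?_
  have hcut_even := even_cutSize_of_odd_of_odd (hD i) hU hi
  grind [hcut_pos i]

theorem stmt12 {V : Type*} [Fintype V] [DecidableEq V]
    (G : SimpleGraph V) (hG : G.Connected)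
    (T : Finset V) (hTeven : Even T.card)
    (k : ℕ) (J : Fin k → SimpleGraph V)
    (hJG : ∀ i, J i ≤ G) (hJtree : ∀ i, (J i).IsTree)
    (lam : Fin k → ℝ) (hlam0 : ∀ i, 0 ≤ lam i) (hlam1 : ∑ i, lam i = 1)
    (x : Sym2 V → ℝ)
    (hx : ∀ e ∈ G.edgeSet,
      x e = ∑ i, lam i * (if e ∈ (J i).edgeSet then 1 else 0))
    (D : Fin k → Finset V)
    (hD : ∀ i v, v ∈ D i ↔
      ((v ∈ T ∧ Even (treeDeg (J i) v)) ∨ (v ∉ T ∧ Odd (treeDeg (J i) v))))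
    (U : Finset V) (hU : Odd ((U ∩ T).card)) :
    ∑ i ∈ univ.filter (fun i => Odd ((U ∩ D i).card)), lam i ≤ xCut G x U - 1 :=
  stmt12_general G T hTeven k J hJG hJtree lam hlam0 hlam1 x hx D hD U hU
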